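/- arXiv:1703.05038 — 2 statements merged into one kernel-verified Lean document; each statement's English description precedes it below -/
import Mathlib

section
/- For a full-rank square matrix X of size d×d and 0 < p ≤ 2, ‖X‖_{S_p}^p = (1/2)(‖W_L^{1/2} X‖_F^2 + ‖X W_R^{1/2}‖_F^2), where W_L = (X X*)^{(p-2)/2} and W_R = (X* X)^{(p-2)/2}. That is, the Schatten-p power is the weighted ℓ₂-norm squared of the vectorization of X with weight matrix equal to the arithmetic mean (I ⊗ W_L + W_R ⊗ I)/2. -/
open scoped BigOperators Kronecker
open Matrix

noncomputable def sv {d₁ d₂ : ℕ} (X : Matrix (Fin d₁) (Fin d₂) ℂ) (i : Fin d₂) : ℝ :=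
  Real.sqrt ((Matrix.isHermitian_conjTranspose_mul_self X).eigenvalues i)

noncomputable def svDesc {d₁ d₂ : ℕ} (X : Matrix (Fin d₁) (Fin d₂) ℂ) (i : Fin d₂) : ℝ :=
  (sv X ∘ Tuple.sort (sv X)) i.rev

noncomputable def hermPow {d : ℕ} {A : Matrix (Fin d) (Fin d) ℂ} (hA : A.IsHermitian) (r : ℝ) :
    Matrix (Fin d) (Fin d) ℂ :=
  (hA.eigenvectorUnitary : Matrix (Fin d) (Fin d) ℂ) *
    Matrix.diagonal (fun i => ((hA.eigenvalues i ^ r : ℝ) : ℂ)) *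
    star (hA.eigenvectorUnitary : Matrix (Fin d) (Fin d) ℂ)

noncomputable def frobSq {d₁ d₂ : ℕ} (X : Matrix (Fin d₁) (Fin d₂) ℂ) : ℝ :=
  (Matrix.trace (Xᴴ * X)).re

def ksum {d₁ d₂ : ℕ} (A : Matrix (Fin d₁) (Fin d₁) ℂ) (B : Matrix (Fin d₂) (Fin d₂) ℂ) :
    Matrix (Fin d₂ × Fin d₁) (Fin d₂ × Fin d₁) ℂ :=
  (1 : Matrix (Fin d₂) (Fin d₂) ℂ) ⊗ₖ A + B ⊗ₖ (1 : Matrix (Fin d₁) (Fin d₁) ℂ)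

def vec {d₁ d₂ : ℕ} (X : Matrix (Fin d₁) (Fin d₂) ℂ) : Fin d₂ × Fin d₁ → ℂ :=
  fun ji => X ji.2 ji.1

/-!
`X` intertwines `XᴴX` and `XXᴴ`, i.e. `(XXᴴ) X = X (XᴴX)`; passing to eigenbases, the
intertwined matrix `U⋆ X V` can only connect equal eigenvalues, so `X` also intertwines every
spectral function of the two: `W_L^{1/2} X = X W_R^{1/2}`. Hence both Frobenius terms agree, and
diagonalizing `B = XᴴX` gives `‖X W_R^{1/2}‖_F² = tr (B^r B B^r) = Σ λᵢ^{2r+1}` with `r = (p-2)/4`,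
which is `Σ λᵢ^{p/2} = Σ σᵢ^p`.
-/

lemma diagonal_map_mul_eq_mul_diagonal_map {m n R : Type*} [Fintype m] [Fintype n]
    [DecidableEq m] [DecidableEq n] [CommRing R] [IsDomain R] {a : m → R} {b : n → R}
    {M : Matrix m n R} (h : diagonal a * M = M * diagonal b) (f : R → R) :
    diagonal (f ∘ a) * M = M * diagonal (f ∘ b) := by
  ext i j
  have hij : a i * M i j = M i j * b j := by
    simpa only [diagonal_mul, mul_diagonal] using congrFun (congrFun h i) j
  simp only [diagonal_mul, mul_diagonal, Function.comp_apply]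
  rcases eq_or_ne (M i j) 0 with hM | hM
  · simp [hM]
  · rw [mul_comm, mul_right_cancel₀ hM (hij.trans (mul_comm _ _))]

lemma mul_diagonal_map_mul_star_mul_eq {m n R : Type*} [Fintype m] [Fintype n]
    [DecidableEq m] [DecidableEq n] [CommRing R] [IsDomain R] [StarRing R]
    {U : Matrix m m R} {V : Matrix n n R} (hU : U ∈ unitaryGroup m R) (hV : V ∈ unitaryGroup n R)
    {a : m → R} {b : n → R} {X : Matrix m n R}
    (h : U * diagonal a * star U * X = X * (V * diagonal b * star V)) (f : R → R) :
    U * diagonal (f ∘ a) * star U * X = X * (V * diagonal (f ∘ b) * star V) := by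
  have hM : diagonal a * (star U * X * V) = (star U * X * V) * diagonal b := by
    calc diagonal a * (star U * X * V)
        = star U * (U * diagonal a * star U * X) * V := by
          simp only [Matrix.mul_assoc, ← Matrix.mul_assoc (star U) U,
            Unitary.star_mul_self_of_mem hU, Matrix.one_mul]
      _ = (star U * X * V) * diagonal b := by
          rw [h]
          simp only [Matrix.mul_assoc, Unitary.star_mul_self_of_mem hV, Matrix.mul_one]
  calc U * diagonal (f ∘ a) * star U * X
      = U * (diagonal (f ∘ a) * (star U * X * V)) * star V := by
        simp only [Matrix.mul_assoc, Unitary.mul_star_self_of_mem hV, Matrix.mul_one]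
    _ = X * (V * diagonal (f ∘ b) * star V) := by
        rw [diagonal_map_mul_eq_mul_diagonal_map hM f]
        simp only [← Matrix.mul_assoc, Unitary.mul_star_self_of_mem hU, Matrix.one_mul]

section hermPow

variable {d : ℕ} {A : Matrix (Fin d) (Fin d) ℂ}

lemma Matrix.IsHermitian.eq_eigenvectorUnitary_mul_diagonal_mul_star (hA : A.IsHermitian) :
    A = (hA.eigenvectorUnitary : Matrix (Fin d) (Fin d) ℂ) *
      diagonal (RCLike.ofReal ∘ hA.eigenvalues) *
      star (hA.eigenvectorUnitary : Matrix (Fin d) (Fin d) ℂ) :=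
  hA.spectral_theorem

lemma conjTranspose_hermPow (hA : A.IsHermitian) (r : ℝ) : (hermPow hA r)ᴴ = hermPow hA r := by
  simp only [hermPow, conjTranspose_mul, star_eq_conjTranspose, conjTranspose_conjTranspose,
    diagonal_conjTranspose, Matrix.mul_assoc, Pi.star_def, Complex.star_def, Complex.conj_ofReal]

lemma trace_hermPow_mul_mul_hermPow (hA : A.IsHermitian) (r s : ℝ) :
    trace (hermPow hA r * A * hermPow hA s) =
      ∑ i, ((hA.eigenvalues i ^ r * hA.eigenvalues i * hA.eigenvalues i ^ s : ℝ) : ℂ) := by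
  have hU := Unitary.coe_star_mul_self hA.eigenvectorUnitary
  -- only the middle `A` may be rewritten: `hA` itself depends on `A`
  conv_lhs => enter [1, 1, 2]; rw [hA.eq_eigenvectorUnitary_mul_diagonal_mul_star]
  simp only [hermPow, Matrix.mul_assoc,
    ← Matrix.mul_assoc _ (hA.eigenvectorUnitary : Matrix (Fin d) (Fin d) ℂ), hU, Matrix.one_mul]
  rw [trace_mul_comm]
  simp only [mul_assoc, hU, Matrix.mul_one, diagonal_mul_diagonal, trace_diagonal,
    RCLike.ofReal_eq_complex_ofReal, Function.comp_apply, Complex.ofReal_mul]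

lemma hermPow_mul_eq_mul_hermPow {B X : Matrix (Fin d) (Fin d) ℂ} (hA : A.IsHermitian)
    (hB : B.IsHermitian) (h : A * X = X * B) (r : ℝ) :
    hermPow hA r * X = X * hermPow hB r := by
  refine mul_diagonal_map_mul_star_mul_eq hA.eigenvectorUnitary.2 hB.eigenvectorUnitary.2
    (a := RCLike.ofReal ∘ hA.eigenvalues) (b := RCLike.ofReal ∘ hB.eigenvalues) ?_
    fun z => ((z.re ^ r : ℝ) : ℂ)
  rwa [hA.eq_eigenvectorUnitary_mul_diagonal_mul_star,
    hB.eq_eigenvectorUnitary_mul_diagonal_mul_star] at h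

lemma frobSq_mul_hermPow_conjTranspose_mul_self (X : Matrix (Fin d) (Fin d) ℂ) (r : ℝ) :
    frobSq (X * hermPow (isHermitian_conjTranspose_mul_self X) r) =
      ∑ i, ((isHermitian_conjTranspose_mul_self X).eigenvalues i ^ r *
        (isHermitian_conjTranspose_mul_self X).eigenvalues i *
        (isHermitian_conjTranspose_mul_self X).eigenvalues i ^ r) := by
  rw [frobSq, conjTranspose_mul, conjTranspose_hermPow, Matrix.mul_assoc, ← Matrix.mul_assoc Xᴴ,
    ← Matrix.mul_assoc, trace_hermPow_mul_mul_hermPow, Complex.re_sum]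
  simp only [Complex.ofReal_re]

end hermPow

lemma Real.sqrt_rpow_eq_rpow_mul_self_mul_rpow {μ p : ℝ} (hμ : 0 ≤ μ) (hp : 0 < p) :
    √μ ^ p = μ ^ ((p - 2) / 4) * μ * μ ^ ((p - 2) / 4) := by
  calc √μ ^ p = μ ^ ((p - 2) / 4 + 1 + (p - 2) / 4) := by
        rw [Real.sqrt_eq_rpow, ← Real.rpow_mul hμ]
        ring_nf
    _ = μ ^ ((p - 2) / 4) * μ * μ ^ ((p - 2) / 4) := by
        rw [Real.rpow_add' hμ (by linarith), Real.rpow_add' hμ (by linarith), Real.rpow_one]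

theorem stmt1_general {d : ℕ} (X : Matrix (Fin d) (Fin d) ℂ)
    (p : ℝ) (hp0 : 0 < p) :
    (∑ i, sv X i ^ p) =
      (1 / 2) *
        (frobSq (hermPow (Matrix.isHermitian_mul_conjTranspose_self X) ((p - 2) / 4) * X) +
         frobSq (X * hermPow (Matrix.isHermitian_conjTranspose_mul_self X) ((p - 2) / 4))) := by
  rw [hermPow_mul_eq_mul_hermPow _ (isHermitian_conjTranspose_mul_self X) (Matrix.mul_assoc _ _ _),
    ← two_mul, one_div, inv_mul_cancel_left₀ two_ne_zero,
    frobSq_mul_hermPow_conjTranspose_mul_self]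
  exact Finset.sum_congr rfl fun i _ =>
    Real.sqrt_rpow_eq_rpow_mul_self_mul_rpow (eigenvalues_conjTranspose_mul_self_nonneg X i) hp0

/-- arithmetic mean of the one-sided weights:
`‖X‖_{S_p}^p = (1/2)(‖W_L^{1/2} X‖_F² + ‖X W_R^{1/2}‖_F²)` for full-rank square `X`,
where `W_L = (X Xᴴ)^{(p-2)/2}` and `W_R = (Xᴴ X)^{(p-2)/2}`. -/
theorem stmt1 {d : ℕ} (X : Matrix (Fin d) (Fin d) ℂ) (hX : IsUnit X.det)
    (p : ℝ) (hp0 : 0 < p) (hp2 : p ≤ 2) :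
    (∑ i, sv X i ^ p) =
      (1 / 2) *
        (frobSq (hermPow (Matrix.isHermitian_mul_conjTranspose_self X) ((p - 2) / 4) * X) +
         frobSq (X * hermPow (Matrix.isHermitian_conjTranspose_mul_self X) ((p - 2) / 4))) :=
  stmt1_general X p hp0
end

section
/- Rank-2r splitting bound: let X^{(n)} have SVD with left/right singular vector matrices split as U = (U_T, U_{T_c}) and V = (V_T, V_{T_c}) where U_T, V_T contain the first r singular vectors. Then for any matrix η, the best rank-2r approximation η_{2r} of η satisfies ‖η − η_{2r}‖_{S_p} ≤ ‖U_{T_c}* η V_{T_c}‖_{S_p} for every 0 < p ≤ 1. -/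
/-!
With `P = U_{T_c} U_{T_c}ᴴ` and `Q = V_{T_c} V_{T_c}ᴴ`, the competitor `B = η - P η Q` equals
`(1 - P) η + P η (1 - Q)`, and `1 - P`, `1 - Q` have rank at most `r`, so `rank B ≤ 2r`.
The residual `η - B = U_{T_c} M V_{T_c}ᴴ`, `M = U_{T_c}ᴴ η V_{T_c}`, has Gram matrix
`V_{T_c} (Mᴴ M) V_{T_c}ᴴ`, whose characteristic polynomial agrees with that of `Mᴴ M` up to a
power of `X`; hence both have the same nonzero singular values and the optimality of `η_{2r}`
against `B` is the claim.
-/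

open scoped BigOperators Kronecker ComplexOrder
open Matrix

namespace Matrix

variable {l m n k : Type*}

section Rank

variable {K : Type*} [Field K]

theorem rank_add_le [Fintype n] (A B : Matrix l n K) : (A + B).rank ≤ A.rank + B.rank := by
  simp only [rank]
  have hrange : LinearMap.range (A + B).mulVecLin ≤
      LinearMap.range A.mulVecLin ⊔ LinearMap.range B.mulVecLin := by
    rintro x ⟨y, rfl⟩
    rw [mulVecLin_add]
    exact Submodule.add_mem_sup ⟨y, rfl⟩ ⟨y, rfl⟩
  exact (Submodule.finrank_mono hrange).trans (Submodule.finrank_add_le_finrank_add_finrank _ _)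

theorem rank_sub_mul_mul_le [Fintype m] [Fintype n] [DecidableEq m] [DecidableEq n]
    (P : Matrix m m K) (η : Matrix m n K) (Q : Matrix n n K) :
    (η - P * η * Q).rank ≤ (1 - P).rank + (1 - Q).rank := by
  have hsplit : η - P * η * Q = (1 - P) * η + P * η * (1 - Q) := by
    simp only [Matrix.sub_mul, Matrix.mul_sub, Matrix.one_mul, Matrix.mul_one]
    abel
  rw [hsplit]
  exact (rank_add_le _ _).trans
    (add_le_add (rank_mul_le_left _ _) (rank_mul_le_right _ _))

end Rank

section Isometry

variable {𝕜 : Type*} [RCLike 𝕜]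

theorem conjTranspose_mul_self_submatrix_eq_one [Fintype l] [DecidableEq m] [DecidableEq k]
    {U : Matrix l m 𝕜} (hU : Uᴴ * U = 1) {f : k → m} (hf : Function.Injective f) :
    (U.submatrix id f)ᴴ * U.submatrix id f = 1 := by
  rw [conjTranspose_submatrix, ← submatrix_mul _ _ _ id _ Function.bijective_id, hU,
    submatrix_one _ hf]

theorem rank_one_sub_mul_conjTranspose_add_card_le [Fintype m] [Fintype k]
    [DecidableEq m] [DecidableEq k]
    {W : Matrix m k 𝕜} (hW : Wᴴ * W = 1) :
    (1 - W * Wᴴ).rank + Fintype.card k ≤ Fintype.card m := by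
  have hkill : (1 - W * Wᴴ) * W = 0 := by
    rw [Matrix.sub_mul, Matrix.one_mul, Matrix.mul_assoc, hW, Matrix.mul_one, sub_self]
  have hrankW : W.rank = Fintype.card k := by
    rw [← rank_conjTranspose_mul_self, hW, rank_one]
  simpa [hrankW] using rank_add_rank_le_card_of_mul_eq_zero hkill

end Isometry

end Matrix

section SingularValues

open Polynomial

variable {𝕜 : Type*} [RCLike 𝕜]

theorem Matrix.IsHermitian.sum_map_roots_X_pow_mul_charpoly {m : Type*} [Fintype m]
    [DecidableEq m] {A : Matrix m m 𝕜} (hA : A.IsHermitian) (d : ℕ) {f : ℝ → ℝ} (hf : f 0 = 0) :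
    ((X ^ d * A.charpoly).roots.map (f ∘ RCLike.re)).sum = ∑ i, f (hA.eigenvalues i) := by
  rw [roots_mul (mul_ne_zero (pow_ne_zero _ X_ne_zero) A.charpoly_monic.ne_zero), roots_X_pow,
    hA.roots_charpoly_eq_eigenvalues, Multiset.map_add, Multiset.sum_add, Multiset.map_nsmul]
  simp [hf, Multiset.map_map, Multiset.nsmul_singleton]

theorem Matrix.IsHermitian.sum_eigenvalues_eq_of_X_pow_mul_charpoly_eq
    {m n : Type*} [Fintype m] [DecidableEq m] [Fintype n] [DecidableEq n]
    {A : Matrix m m 𝕜} {B : Matrix n n 𝕜} (hA : A.IsHermitian) (hB : B.IsHermitian)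
    (h : X ^ Fintype.card n * A.charpoly = X ^ Fintype.card m * B.charpoly)
    {f : ℝ → ℝ} (hf : f 0 = 0) :
    ∑ i, f (hA.eigenvalues i) = ∑ j, f (hB.eigenvalues j) := by
  rw [← hA.sum_map_roots_X_pow_mul_charpoly _ hf, h, hB.sum_map_roots_X_pow_mul_charpoly _ hf]

theorem sum_sv_isometry_mul_mul_conjTranspose {d₁ d₂ k₁ k₂ : ℕ}
    {U : Matrix (Fin d₁) (Fin k₁) ℂ} {V : Matrix (Fin d₂) (Fin k₂) ℂ}
    (hU : Uᴴ * U = 1) (hV : Vᴴ * V = 1) (M : Matrix (Fin k₁) (Fin k₂) ℂ)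
    {f : ℝ → ℝ} (hf : f 0 = 0) :
    ∑ i, f (sv (U * M * Vᴴ) i) = ∑ j, f (sv M j) := by
  have hgram : (U * M * Vᴴ)ᴴ * (U * M * Vᴴ) = V * (Mᴴ * M * Vᴴ) := by
    simp only [conjTranspose_mul, conjTranspose_conjTranspose, Matrix.mul_assoc]
    rw [← Matrix.mul_assoc Uᴴ, hU, Matrix.one_mul]
  have hgram' : Mᴴ * M * Vᴴ * V = Mᴴ * M := by rw [Matrix.mul_assoc, hV, Matrix.mul_one]
  have hcharpoly := charpoly_mul_comm' V (Mᴴ * M * Vᴴ)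
  rw [← hgram, hgram'] at hcharpoly
  exact IsHermitian.sum_eigenvalues_eq_of_X_pow_mul_charpoly_eq (f := fun t => f √t) _ _
    hcharpoly (by simp [hf])

end SingularValues

/-- rank-2r splitting bound: for unitary U = (U_T, U_{T_c}), V = (V_T, V_{T_c})
(first r columns vs. the rest), any best rank-2r approximation η_{2r} of η in Schatten-p
satisfies ‖η − η_{2r}‖_{S_p} ≤ ‖U_{T_c}ᴴ η V_{T_c}‖_{S_p} (equivalently for p-th powers). -/
theorem stmt15 {d₁ d₂ r : ℕ} (p : ℝ) (hp0 : 0 < p)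
    (U : Matrix (Fin d₁) (Fin d₁) ℂ) (V : Matrix (Fin d₂) (Fin d₂) ℂ)
    (hU : Uᴴ * U = 1) (hV : Vᴴ * V = 1)
    (η η2r : Matrix (Fin d₁) (Fin d₂) ℂ)
    (hbest : ∀ B : Matrix (Fin d₁) (Fin d₂) ℂ, B.rank ≤ 2 * r →
      (∑ i, sv (η - η2r) i ^ p) ≤ ∑ i, sv (η - B) i ^ p) :
    (∑ i, sv (η - η2r) i ^ p) ≤
      ∑ i, sv
        ((Matrix.of (fun i (j : Fin (d₁ - r)) =>
              U i (⟨r + (j : ℕ), by have := j.isLt; omega⟩ : Fin d₁)))ᴴ * η *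
          Matrix.of (fun i (j : Fin (d₂ - r)) =>
              V i (⟨r + (j : ℕ), by have := j.isLt; omega⟩ : Fin d₂))) i ^ p := by
  set U₁ := Matrix.of (fun i (j : Fin (d₁ - r)) =>
    U i (⟨r + (j : ℕ), by have := j.isLt; omega⟩ : Fin d₁))
  set V₁ := Matrix.of (fun i (j : Fin (d₂ - r)) =>
    V i (⟨r + (j : ℕ), by have := j.isLt; omega⟩ : Fin d₂))
  have hU₁ : U₁ᴴ * U₁ = 1 :=
    conjTranspose_mul_self_submatrix_eq_one hU fun _ _ h => by simpa [Fin.ext_iff] using h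
  have hV₁ : V₁ᴴ * V₁ = 1 :=
    conjTranspose_mul_self_submatrix_eq_one hV fun _ _ h => by simpa [Fin.ext_iff] using h
  set B := η - U₁ * U₁ᴴ * η * (V₁ * V₁ᴴ)
  have hBrank : B.rank ≤ 2 * r := by
    have hPU := rank_one_sub_mul_conjTranspose_add_card_le hU₁
    have hPV := rank_one_sub_mul_conjTranspose_add_card_le hV₁
    simp only [Fintype.card_fin] at hPU hPV
    refine (rank_sub_mul_mul_le _ η _).trans ?_
    omega
  have hresidual : η - B = U₁ * (U₁ᴴ * η * V₁) * V₁ᴴ := by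
    simp only [B, sub_sub_cancel, Matrix.mul_assoc]
  calc (∑ i, sv (η - η2r) i ^ p) ≤ ∑ i, sv (η - B) i ^ p := hbest B hBrank
    _ = ∑ i, sv (U₁ᴴ * η * V₁) i ^ p := by
      rw [hresidual]
      exact sum_sv_isometry_mul_mul_conjTranspose hU₁ hV₁ _ (f := (· ^ p)) (Real.zero_rpow hp0.ne')
end
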